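/- arXiv:2411.15494 — 3 statements merged into one kernel-verified Lean document; each statement's English description precedes it below -/
import Mathlib

section
/- Let n = 2^L and consider a complete binary tree of depth L whose leaves are labeled 0,...,n-1. For an integer α with 0 ≤ α < n, let PE(α) be the set of internal/leaf nodes on the root-to-leaf path to leaf α. For an integer β with 0 ≤ β < n, let RE(β) be the canonical cover of the interval (β, n-1]: the minimal set of nodes, at most one per depth, whose descendant leaves are exactly {β+1, ..., n-1}. Then α > β if and only if PE(α) and RE(β) share a common node. -/
/-!
If `β < α < 2^L`, let `s + 1` be the least height of a common ancestor of the leaves `α` and `β`,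
i.e. `α / 2^(s+1) = β / 2^(s+1)` but `α / 2^s ≠ β / 2^s`. Their ancestors at height `s` are then
the two children of that node, with `β`'s on the left: bit `s` of `β` is `0` and
`α / 2^s = β / 2^s + 1`, which is the node of `RE(β)` at depth `L - s` lying on `PE(α)`.
Conversely, `α / m = β / m + 1` forces `β < α` because `β ↦ β / m` is monotone.
-/

lemma mod_two_eq_zero_and_eq_succ_of_div_two_eq {x y : ℕ} (h : x / 2 = y / 2) (hyx : y < x) :
    y % 2 = 0 ∧ x = y + 1 := by
  omega

lemma exists_testBit_eq_false_and_div_two_pow_eq_succ {α β L : ℕ} (hβα : β < α) (hα : α < 2 ^ L) :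
    ∃ s < L, β.testBit s = false ∧ α / 2 ^ s = β / 2 ^ s + 1 := by
  have hroot : α / 2 ^ L = β / 2 ^ L := by
    rw [Nat.div_eq_of_lt hα, Nat.div_eq_of_lt (hβα.trans hα)]
  have hsame : ∃ t, α / 2 ^ t = β / 2 ^ t := ⟨L, hroot⟩
  have htL : Nat.find hsame ≤ L := Nat.find_min' hsame hroot
  have ht0 : Nat.find hsame ≠ 0 := fun h0 => by
    have h := Nat.find_spec hsame
    rw [h0, pow_zero, Nat.div_one, Nat.div_one] at h
    exact hβα.ne' h
  obtain ⟨s, hs⟩ := Nat.exists_eq_succ_of_ne_zero ht0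
  have hdiff : α / 2 ^ s ≠ β / 2 ^ s := Nat.find_min hsame (by omega)
  have hparent : α / 2 ^ s / 2 = β / 2 ^ s / 2 := by
    simpa only [Nat.div_div_eq_div_mul, ← pow_succ, hs] using Nat.find_spec hsame
  have hle : β / 2 ^ s ≤ α / 2 ^ s := Nat.div_le_div_right hβα.le
  obtain ⟨hmod, hsucc⟩ :=
    mod_two_eq_zero_and_eq_succ_of_div_two_eq hparent (lt_of_le_of_ne hle hdiff.symm)
  exact ⟨s, by omega, by simp [Nat.testBit_eq_decide_div_mod_eq, hmod], hsucc⟩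

/-- A node at depth `d` of the tree is identified with the length-`d` binary prefix of leaf
labels, i.e. with the number `p` such that the node covers leaves `p·2^(L-d), …, (p+1)·2^(L-d)-1`.
`PE(α)` contains, at each depth `d ∈ [1,L]`, the node `α / 2^(L-d)`.
`RE(β)`, the canonical cover of `(β, 2^L-1]`, contains at depth `d` the node
`β / 2^(L-d) + 1` exactly when bit `L-d` of `β` is `0` (the right siblings along
the path to `β` where the path goes left). -/
theorem pe_re_comparison_general (L α β : ℕ) (hα : α < 2 ^ L) :
    α > β ↔ ∃ d ∈ Finset.Icc 1 L,
      Nat.testBit β (L - d) = false ∧ α / 2 ^ (L - d) = β / 2 ^ (L - d) + 1 := by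
  constructor
  · intro hβα
    obtain ⟨s, hsL, hbit, hdiv⟩ := exists_testBit_eq_false_and_div_two_pow_eq_succ hβα hα
    refine ⟨L - s, Finset.mem_Icc.mpr ⟨by omega, by omega⟩, ?_⟩
    rw [Nat.sub_sub_self hsL.le]
    exact ⟨hbit, hdiv⟩
  · rintro ⟨d, -, -, hdiv⟩
    exact Nat.lt_of_div_lt_div (c := 2 ^ (L - d)) (hdiv ▸ Nat.lt_succ_self _)

/-- Complete binary tree of depth `L` with leaves `0,…,2^L-1`. A node at depth `d`
is identified with the length-`d` binary prefix of leaf labels, i.e. with the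
number `p` such that the node covers leaves `p·2^(L-d), …, (p+1)·2^(L-d)-1`.
`PE(α)` contains, at each depth `d ∈ [1,L]`, the node `α / 2^(L-d)`.
`RE(β)`, the canonical cover of `(β, 2^L-1]`, contains at depth `d` the node
`β / 2^(L-d) + 1` exactly when bit `L-d` of `β` is `0` (the right siblings along
the path to `β` where the path goes left).
Claim: `α > β` iff the path `PE(α)` and the cover `RE(β)` share a node. -/
theorem pe_re_comparison (L α β : ℕ) (hα : α < 2 ^ L) (hβ : β < 2 ^ L) :
    α > β ↔ ∃ d ∈ Finset.Icc 1 L,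
      Nat.testBit β (L - d) = false ∧ α / 2 ^ (L - d) = β / 2 ^ (L - d) + 1 :=
  pe_re_comparison_general L α β hα
end

section
/- For integers x, y with 0 ≤ x, y < n, identifying each node at depth d of a complete binary tree with 2^L leaves (n = 2^L) with the length-d binary prefix of a leaf label: the path PE(x) and the canonical cover RE(y) of (y, n-1] share at most one common node. That is, if they intersect, the common node is unique. -/
lemma pe_re_aux (x y a b : ℕ) (hab : b < a)
    (hta : Nat.testBit y a = false) (ha : x / 2 ^ a = y / 2 ^ a + 1)
    (htb : Nat.testBit y b = false) (hb : x / 2 ^ b = y / 2 ^ b + 1) : False := by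
  set m := y / 2 ^ b with hm
  have hk : a = b + (a - b) := by omega
  have h2 : 2 ^ a = 2 ^ b * 2 ^ (a - b) := by rw [← pow_add, Nat.add_sub_cancel' (le_of_lt hab)]
  have hx' : x / 2 ^ a = (x / 2 ^ b) / 2 ^ (a - b) := by
    rw [h2, Nat.div_div_eq_div_mul]
  have hy' : y / 2 ^ a = m / 2 ^ (a - b) := by
    rw [h2, ← Nat.div_div_eq_div_mul]
  have hmeven : m % 2 = 0 := by
    rw [Nat.testBit_eq_decide_div_mod_eq] at htb
    simp [← hm] at htb
    omega
  have hnd : ¬ (2 ^ (a - b) ∣ m + 1) := by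
    intro hd
    have h1 : (2 : ℕ) ∣ 2 ^ (a - b) := dvd_pow_self 2 (by omega)
    have : (2 : ℕ) ∣ m + 1 := h1.trans hd
    omega
  have hsucc : (m + 1) / 2 ^ (a - b) = m / 2 ^ (a - b) := by
    rw [Nat.succ_div, if_neg hnd]; simp
  rw [hx', hb, hsucc, hy'] at ha
  omega

/-- Uniqueness of the common node of `PE(x)` and `RE(y)`: identifying a node at
depth `d` with the length-`d` binary prefix of leaf labels, `PE(x)` contains at
depth `d` the node `x / 2^(L-d)`, and the canonical cover `RE(y)` of `(y, 2^L-1]`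
contains at depth `d` the node `y / 2^(L-d) + 1` exactly when bit `L-d` of `y`
is `0`. If they intersect, the common node (and its depth) is unique. -/
theorem pe_re_common_node_unique (L x y : ℕ) (hx : x < 2 ^ L) (hy : y < 2 ^ L) :
    ∀ d₁ ∈ Finset.Icc 1 L, ∀ d₂ ∈ Finset.Icc 1 L,
      (Nat.testBit y (L - d₁) = false ∧ x / 2 ^ (L - d₁) = y / 2 ^ (L - d₁) + 1) →
      (Nat.testBit y (L - d₂) = false ∧ x / 2 ^ (L - d₂) = y / 2 ^ (L - d₂) + 1) →
      d₁ = d₂ := by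
  intro d₁ h₁ d₂ h₂ ⟨t₁, e₁⟩ ⟨t₂, e₂⟩
  simp only [Finset.mem_Icc] at h₁ h₂
  rcases lt_trichotomy d₁ d₂ with h | h | h
  · exact absurd (pe_re_aux x y (L - d₁) (L - d₂) (by omega) t₁ e₁ t₂ e₂) id
  · exact h
  · exact absurd (pe_re_aux x y (L - d₂) (L - d₁) (by omega) t₂ e₂ t₁ e₁) id
end

section
/- Replication by doubling: let v ∈ R^N be a vector (N = 2^K slots over a commutative ring R) whose first n entries are x₀,...,x_{n-1} (n a power of 2 dividing N) and whose remaining entries are 0. Define the sequence v⁰ = v, v^{i+1} = v^i + Rotate(v^i, n·2^i) where Rotate cyclically shifts slots. Then after log₂(N/n) steps, v^{log₂(N/n)} consists of N/n consecutive copies of (x₀,...,x_{n-1}). -/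
/-- One doubling step of replication: `v^(i+1) = v^i + Rotate(v^i, n·2^i)`,
where slots are indexed by `ℤ/Nℤ` (`N = 2^K`) and `Rotate(w, r)_j = w_(j-r)`. -/
def replicate (K : ℕ) {R : Type*} [AddCommMonoid R] (n : ℕ)
    (v : ZMod (2 ^ K) → R) : ℕ → ZMod (2 ^ K) → R
  | 0 => v
  | i + 1 => fun j =>
      replicate K n v i j + replicate K n v i (j - ((n * 2 ^ i : ℕ) : ZMod (2 ^ K)))

/-- Replication by doubling: if `v` has `x₀,…,x_(n-1)` in its first `n` slots
(`n = 2^L`, `n ∣ N = 2^K`) and `0` elsewhere, then after `log₂(N/n) = K - L`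
doubling steps the result consists of `N/n` consecutive copies of
`(x₀,…,x_(n-1))`, i.e. slot `j` holds `x_(j mod n)`. -/
theorem replicate_by_doubling (K L : ℕ) (hL : L ≤ K) {R : Type*} [AddCommMonoid R]
    (x : ℕ → R) (v : ZMod (2 ^ K) → R)
    (hv : ∀ j : ZMod (2 ^ K), v j = if j.val < 2 ^ L then x j.val else 0) :
    ∀ j : ZMod (2 ^ K), replicate K (2 ^ L) v (K - L) j = x (j.val % 2 ^ L) := by
  haveI : NeZero (2 ^ K) := ⟨pow_ne_zero _ two_ne_zero⟩
  have key : ∀ i, L + i ≤ K → ∀ j : ZMod (2 ^ K),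
      replicate K (2 ^ L) v i j = if j.val < 2 ^ (L + i) then x (j.val % 2 ^ L) else 0 := by
    intro i
    induction i with
    | zero =>
      intro _ j
      rw [show replicate K (2 ^ L) v 0 j = v j from rfl, hv]
      simp only [Nat.add_zero]
      split_ifs with h
      · rw [Nat.mod_eq_of_lt h]
      · rfl
    | succ i ih =>
      intro hKi j
      have hKi' : L + i ≤ K := by omega
      have hlt : 2 ^ (L + i) < 2 ^ K := Nat.pow_lt_pow_right one_lt_two (by omega)
      have hle2 : 2 ^ (L + (i + 1)) ≤ 2 ^ K := Nat.pow_le_pow_right (by norm_num) hKi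
      have hpow : (2 ^ L * 2 ^ i : ℕ) = 2 ^ (L + i) := (pow_add 2 L i).symm
      set m : ℕ := 2 ^ (L + i) with hm
      have hmval : ((m : ℕ) : ZMod (2 ^ K)).val = m := by
        rw [ZMod.val_natCast, Nat.mod_eq_of_lt hlt]
      have hjv : j.val < 2 ^ K := j.val_lt
      have hsub : (j - ((m : ℕ) : ZMod (2 ^ K))).val =
          if j.val < m then j.val + (2 ^ K - m) else j.val - m := by
        split_ifs with h
        · have : j - ((m : ℕ) : ZMod (2 ^ K)) = j + ((2 ^ K - m : ℕ) : ZMod (2 ^ K)) := by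
            have : ((m : ℕ) : ZMod (2 ^ K)) + ((2 ^ K - m : ℕ) : ZMod (2 ^ K)) = 0 := by
              rw [← Nat.cast_add, Nat.add_sub_cancel' hlt.le, ZMod.natCast_self]
            rw [sub_eq_add_neg, neg_eq_of_add_eq_zero_right this]
          rw [this, ZMod.val_add_of_lt, ZMod.val_natCast,
            Nat.mod_eq_of_lt (by omega : 2 ^ K - m < 2 ^ K)]
          rw [ZMod.val_natCast, Nat.mod_eq_of_lt (by omega : 2 ^ K - m < 2 ^ K)]
          omega
        · rw [ZMod.val_sub (by omega : (((m : ℕ) : ZMod (2 ^ K))).val ≤ j.val), hmval]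
      show replicate K (2 ^ L) v i j +
          replicate K (2 ^ L) v i (j - ((2 ^ L * 2 ^ i : ℕ) : ZMod (2 ^ K))) = _
      rw [hpow, ih hKi', ih hKi', hsub]
      have h2m : 2 ^ (L + (i + 1)) = 2 * m := by
        rw [hm, ← pow_succ']; congr 1
      have hdvd : 2 ^ L ∣ m := pow_dvd_pow 2 (Nat.le_add_right L i)
      by_cases h1 : j.val < m
      · simp only [if_pos h1]
        rw [if_neg (by omega), if_pos (by omega), add_zero]
      · simp only [if_neg h1]
        by_cases h2 : j.val < 2 * m
        · rw [if_pos (by omega : j.val - m < m),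
            if_pos (by omega : j.val < 2 ^ (L + (i + 1))), zero_add]
          congr 1
          obtain ⟨c, hc⟩ := hdvd
          rw [hc]
          conv_rhs => rw [← Nat.sub_add_cancel (by omega : 2 ^ L * c ≤ j.val),
            Nat.add_mul_mod_self_left]
        · rw [if_neg (by omega : ¬ j.val - m < m),
            if_neg (by omega : ¬ j.val < 2 ^ (L + (i + 1))), add_zero]
  intro j
  rw [key (K - L) (by omega) j, if_pos (by rw [Nat.add_sub_cancel' hL]; exact j.val_lt)]
end
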